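/- arXiv:2409.14559 — 4 statements merged into one kernel-verified Lean document; each statement's English description precedes it below -/
import Mathlib

section
/- Let U be a string and let C be the shortest cover of U, with |C| < |U|. Let j be the second smallest starting position of an occurrence of C in U (it exists, and 0 < j ≤ |C|). Then: (a) C is aperiodic; (b) 2j > |C|; (c) U[0..j) = U[j..2j), i.e., U[0..2j) is a square; and (d) U[0..j) is primitive, i.e., U[0..2j) is a primitively rooted square. -/
section Defs

variable {α : Type*}

/-- `C` occurs in `T` at starting position `i`. -/
def OccursAt (C T : List α) (i : ℕ) : Prop :=
  i + C.length ≤ T.length ∧ (T.drop i).take C.length = C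

/-- `C` is a cover of `T`: `C` occurs in `T` and every position of `T`
lies within an occurrence of `C`. -/
def IsCover (C T : List α) : Prop :=
  (∃ i, OccursAt C T i) ∧
    ∀ q, q < T.length → ∃ i, OccursAt C T i ∧ i ≤ q ∧ q < i + C.length

/-- A border of `T` is both a prefix and a suffix of `T`. -/
def IsBorder (B T : List α) : Prop := B <+: T ∧ B <:+ T

/-- `p` is a period of `U`: `U[i] = U[i+p]` for all `0 ≤ i < |U| - p`. -/
def IsPeriod (p : ℕ) (U : List α) : Prop :=
  0 < p ∧ ∀ i, i + p < U.length → U[i]? = U[i + p]?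

/-- `U` is aperiodic: its smallest period `p` satisfies `2p > |U|`
(equivalently, every period `p` of `U` satisfies `2p > |U|`). -/
def StrAperiodic (U : List α) : Prop := ∀ p, IsPeriod p U → U.length < 2 * p

/-- A nonempty string `X` is primitive if `X = Y^t` implies `t = 1`. -/
def StrPrimitive (X : List α) : Prop :=
  X ≠ [] ∧ ∀ (Y : List α) (t : ℕ), X = (List.replicate t Y).flatten → t = 1

/-- A string is superprimitive if it has no proper cover. -/
def Superprimitive (T : List α) : Prop :=
  ¬ ∃ C : List α, IsCover C T ∧ C.length < T.length

/-- The length of the shortest cover of `T`. -/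
noncomputable def covLen (T : List α) : ℕ :=
  sInf {c | ∃ C : List α, C.length = c ∧ IsCover C T}

/-- `{a, a+p, ..., a+(t-1)p}` is a maximal arithmetic progression with
difference `p` inside the set `S`. -/
def MaxProg (S : Set ℕ) (p a t : ℕ) : Prop :=
  0 < t ∧ (∀ r, r < t → a + r * p ∈ S) ∧ (∀ b, b + p = a → b ∉ S) ∧ a + t * p ∉ S

end Defs

section Aux
variable {α : Type*}

lemma occursAt_iff {C T : List α} {i : ℕ} :
    OccursAt C T i ↔ i + C.length ≤ T.length ∧
      ∀ k, k < C.length → T[i+k]? = C[k]? := by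
  constructor
  · rintro ⟨h1, h2⟩
    refine ⟨h1, fun k hk => ?_⟩
    conv_rhs => rw [← h2]
    rw [List.getElem?_take, if_pos hk, List.getElem?_drop]
  · rintro ⟨h1, h2⟩
    refine ⟨h1, List.ext_getElem? fun n => ?_⟩
    by_cases hn : n < C.length
    · rw [List.getElem?_take, if_pos hn, List.getElem?_drop, h2 n hn]
    · push_neg at hn
      rw [List.getElem?_eq_none (l := (T.drop i).take C.length) (by simp; omega),
        List.getElem?_eq_none hn]

lemma occ_trans {C' C T : List α} {i i' : ℕ}
    (h : OccursAt C T i) (h' : OccursAt C' C i') : OccursAt C' T (i + i') := by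
  rw [occursAt_iff] at *
  obtain ⟨h1, h2⟩ := h
  obtain ⟨h1', h2'⟩ := h'
  refine ⟨by omega, fun k hk => ?_⟩
  have := h2 (i' + k) (by omega)
  rw [show i + i' + k = i + (i' + k) by omega, this, h2' k hk]

lemma cover_trans {C' C U : List α} (h' : IsCover C' C) (h : IsCover C U) :
    IsCover C' U := by
  obtain ⟨⟨i0, hi0⟩, hc⟩ := h
  obtain ⟨⟨i0', hi0'⟩, hc'⟩ := h'
  refine ⟨⟨i0 + i0', occ_trans hi0 hi0'⟩, fun q hq => ?_⟩
  obtain ⟨i, hi, hiq, hqi⟩ := hc q hq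
  obtain ⟨i', hi', hiq', hqi'⟩ := hc' (q - i) (by omega)
  exact ⟨i + i', occ_trans hi hi', by omega, by omega⟩

/-- Position 0 of a nonempty covered string is an occurrence, and C ≠ []. -/
lemma cover_zero {C U : List α} (h : IsCover C U) (hlen : 0 < U.length) :
    0 < C.length ∧ OccursAt C U 0 := by
  obtain ⟨i, hi, hi0, h0i⟩ := h.2 0 hlen
  have : i = 0 := by omega
  subst this
  exact ⟨by omega, hi⟩

lemma period_of_two_occ {C U : List α} {j : ℕ}
    (h0 : OccursAt C U 0) (hj : OccursAt C U j) (hj0 : 0 < j) :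
    IsPeriod j C := by
  rw [occursAt_iff] at h0 hj
  refine ⟨hj0, fun i hi => ?_⟩
  have e1 := h0.2 (i + j) hi
  have e2 := hj.2 i (by omega)
  rw [show (0:ℕ) + (i + j) = j + i by omega] at e1
  rw [← e1, ← e2]

/-- If `C` covers `U` and `C` is a shortest cover, then `C` is aperiodic. -/
lemma aperiodic_of_min {C U : List α} (hcov : IsCover C U)
    (hmin : ∀ C' : List α, IsCover C' U → C.length ≤ C'.length) :
    StrAperiodic C := by
  rintro p ⟨hp0, hp⟩
  by_contra hle
  push_neg at hle
  -- 2p ≤ |C|; let C' = C.take (|C| - p)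
  set C' : List α := C.take (C.length - p) with hC'
  have hlenC' : C'.length = C.length - p := by
    rw [hC', List.length_take]; omega
  have hCgetC' : ∀ k, k < C.length - p → C'[k]? = C[k]? := by
    intro k hk
    rw [hC', List.getElem?_take, if_pos hk]
  have hocc0 : OccursAt C' C 0 := by
    rw [occursAt_iff]
    refine ⟨by omega, fun k hk => ?_⟩
    rw [hlenC'] at hk
    rw [hCgetC' k hk]
    congr 1
    omega
  have hoccp : OccursAt C' C p := by
    rw [occursAt_iff]
    refine ⟨by omega, fun k hk => ?_⟩
    rw [hlenC'] at hk
    rw [hCgetC' k hk, hp k (by omega)]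
    congr 1; omega
  have hcovC' : IsCover C' C := by
    refine ⟨⟨0, hocc0⟩, fun q hq => ?_⟩
    by_cases hq' : q < C.length - p
    · exact ⟨0, hocc0, by omega, by omega⟩
    · exact ⟨p, hoccp, by omega, by omega⟩
  have := hmin C' (cover_trans hcovC' hcov)
  omega

/-- Flatten of replicate has period `|Y|`. -/
lemma flatten_replicate_period {Y : List α} {m k : ℕ}
    (hk : k + Y.length < ((List.replicate m Y).flatten).length) :
    ((List.replicate m Y).flatten)[k]? = ((List.replicate m Y).flatten)[k + Y.length]? := by
  have hm : m ≠ 0 := by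
    rintro rfl; simp at hk
  have hlen : ((List.replicate m Y).flatten).length = m * Y.length := by
    simp [List.length_flatten, Nat.mul_comm]
  have h1 : List.replicate m Y = List.replicate (m-1) Y ++ [Y] := by
    rw [← List.replicate_succ']
    congr 1; omega
  have h2 : List.replicate m Y = Y :: List.replicate (m-1) Y := by
    rw [← List.replicate_succ]
    congr 1; omega
  set M := (List.replicate (m-1) Y).flatten with hM
  have hlenM : M.length = (m-1) * Y.length := by
    simp [hM, List.length_flatten, Nat.mul_comm]
  have hsub : m * Y.length = (m-1) * Y.length + Y.length := by
    conv_lhs => rw [show m = (m - 1) + 1 by omega]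
    rw [Nat.succ_mul]
  have hkM : k < M.length := by
    rw [hlenM]; rw [hlen, hsub] at hk; omega
  have e1 : ((List.replicate m Y).flatten)[k]? = M[k]? := by
    conv_lhs => rw [h1]
    rw [List.flatten_append, List.getElem?_append_left hkM]
  have e2 : ((List.replicate m Y).flatten)[k + Y.length]? = M[k]? := by
    conv_lhs => rw [h2]
    rw [List.flatten_cons, List.getElem?_append_right (by omega)]
    congr 1; omega
  rw [e1, e2]

end Aux

/-- Let `C` be the shortest cover of `U` with `|C| < |U|`, and let `j` be the
second smallest starting position of an occurrence of `C` in `U` (the smallest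
is `0`; `j` exists and `0 < j ≤ |C|`). Then (a) `C` is aperiodic; (b) `2j > |C|`;
(c) `U[0..2j)` is a square; (d) `U[0..j)` is primitive, i.e. `U[0..2j)` is a
primitively rooted square. -/
theorem stmt14 {α : Type*} (U C : List α)
    (hcov : IsCover C U) (hproper : C.length < U.length)
    (hmin : ∀ C' : List α, IsCover C' U → C.length ≤ C'.length) :
    ∃ j, 0 < j ∧ OccursAt C U j ∧ (∀ i, 0 < i → i < j → ¬ OccursAt C U i) ∧
      j ≤ C.length ∧
      StrAperiodic C ∧
      C.length < 2 * j ∧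
      U.take (2 * j) = U.take j ++ U.take j ∧
      StrPrimitive (U.take j) := by
  have hU0 : 0 < U.length := by omega
  obtain ⟨hC0, hocc0⟩ := cover_zero hcov hU0
  have hSne : ∃ i, (0 < i ∧ OccursAt C U i) ∧ i ≤ C.length := by
    obtain ⟨i, hi, h1, h2⟩ := hcov.2 C.length hproper
    exact ⟨i, ⟨by omega, hi⟩, by omega⟩
  set S : Set ℕ := {i | 0 < i ∧ OccursAt C U i} with hS
  have hne : S.Nonempty := ⟨hSne.choose, hSne.choose_spec.1⟩
  set j := sInf S with hj
  obtain ⟨hj0, hoccj⟩ := Nat.sInf_mem hne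
  have hjle : j ≤ C.length := by
    obtain ⟨i, hi, hile⟩ := hSne
    exact le_trans (Nat.sInf_le hi) hile
  have hmin' : ∀ i, 0 < i → i < j → ¬ OccursAt C U i := fun i h1 h2 hocc =>
    Nat.notMem_of_lt_sInf h2 ⟨h1, hocc⟩
  have haper : StrAperiodic C := aperiodic_of_min hcov hmin
  have hCj : C.length < 2 * j := haper j (period_of_two_occ hocc0 hoccj hj0)
  have hjU : j + C.length ≤ U.length := hoccj.1
  have h2jU : 2 * j ≤ U.length := by omega
  have hUget0 : ∀ k, k < C.length → U[k]? = C[k]? := by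
    intro k hk
    have := (occursAt_iff.1 hocc0).2 k hk
    simpa using this
  have hUgetj : ∀ k, k < C.length → U[j + k]? = C[k]? := (occursAt_iff.1 hoccj).2
  have hshift : ∀ k, k < j → U[j + k]? = U[k]? := fun k hk => by
    rw [hUgetj k (by omega), hUget0 k (by omega)]
  have hsq : U.take (2 * j) = U.take j ++ U.take j := by
    rw [two_mul, List.take_add]
    congr 1
    refine List.ext_getElem? fun n => ?_
    by_cases hn : n < j
    · rw [List.getElem?_take, if_pos hn, List.getElem?_take, if_pos hn,
        List.getElem?_drop, hshift n hn]
    · rw [List.getElem?_take, if_neg hn, List.getElem?_take, if_neg hn]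
  have hlentakej : (U.take j).length = j := by
    simp only [List.length_take]
    omega
  have hprim : StrPrimitive (U.take j) := by
    constructor
    · intro h
      rw [h] at hlentakej
      simp at hlentakej
      omega
    · intro Y t hYt
      by_contra ht1
      have hlenj : j = t * Y.length := by
        rw [hYt] at hlentakej
        simp [List.length_flatten, Nat.mul_comm] at hlentakej
        omega
      have ht0 : t ≠ 0 := by rintro rfl; omega
      set d := Y.length with hd
      have hd0 : 0 < d := by
        rcases Nat.eq_zero_or_pos d with h | h
        · rw [h] at hlenj; omega
        · exact h
      have ht2 : 2 ≤ t := by omega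
      have h2dj : 2 * d ≤ j := by
        rw [hlenj]
        exact Nat.mul_le_mul_right d ht2
      have hL : U.take (2 * j) = (List.replicate (2 * t) Y).flatten := by
        rw [hsq, hYt, two_mul, List.replicate_add, List.flatten_append]
      have hLget : ∀ k, k < 2*j → U[k]? = (U.take (2*j))[k]? := fun k hk => by
        rw [List.getElem?_take, if_pos hk]
      have hLlen : (U.take (2*j)).length = 2*j := by
        simp only [List.length_take]; omega
      have hperC : IsPeriod d C := by
        refine ⟨hd0, fun i hi => ?_⟩
        have h1 : U[i]? = U[i+d]? := by
          rw [hLget i (by omega), hLget (i+d) (by omega), hL]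
          exact flatten_replicate_period (by rw [← hL, hLlen]; omega)
        rw [← hUget0 i (by omega), ← hUget0 (i+d) (by omega), h1]
      have := haper d hperC
      omega
  exact ⟨j, hj0, hoccj, hmin', hjle, haper, hCj, hsq, hprim⟩
end

section
/- Let U be a string of length ℓ and let C = U[0..c) be the shortest cover of U with c < ℓ. Let j be the second smallest starting position of an occurrence of C in U, and let P = U[0..p) be any aperiodic prefix of U with j ≤ p ≤ c. Then: (a) P occurs in U at position ℓ − c (i.e., U[ℓ−c .. ℓ−c+p) = P); (b) c < 2p, so ℓ − c > ℓ − 2p; and (c) P has no occurrence in U starting at any position q with ℓ − c < q ≤ ℓ − p. Consequently, ℓ − c is the rightmost starting position of an occurrence of P in U among positions at most ℓ − p, and it lies in the interval (ℓ − 2p, ℓ). -/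
section Aux

variable {α : Type*}

lemma occ_points {U : List α} {m i : ℕ} (hm : m ≤ U.length)
    (h : OccursAt (U.take m) U i) :
    i + m ≤ U.length ∧ ∀ x, x < m → U[i + x]? = U[x]? := by
  obtain ⟨h1, h2⟩ := h
  rw [List.length_take, Nat.min_eq_left hm] at h1
  refine ⟨h1, fun x hx => ?_⟩
  have := congrArg (fun l => l[x]?) h2
  simp only [List.length_take, Nat.min_eq_left hm] at this
  rw [List.getElem?_take, if_pos hx, List.getElem?_drop,
      List.getElem?_take, if_pos hx] at this
  exact this

lemma occ_mk {U : List α} {m i : ℕ} (hm : i + m ≤ U.length)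
    (h : ∀ x, x < m → U[i + x]? = U[x]?) :
    OccursAt (U.take m) U i := by
  have hm' : m ≤ U.length := le_trans (Nat.le_add_left _ _) hm
  constructor
  · rw [List.length_take, Nat.min_eq_left hm']
    exact hm
  · rw [List.length_take, Nat.min_eq_left hm']
    refine List.ext_getElem? fun n => ?_
    by_cases hn : n < m
    · rw [List.getElem?_take, if_pos hn, List.getElem?_drop,
          List.getElem?_take, if_pos hn]
      exact h n hn
    · rw [List.getElem?_take, if_neg hn, List.getElem?_take, if_neg hn]

end Aux

/-- Let `U` have length `ℓ`, let `C = U[0..c)` be the shortest cover of `U`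
with `c < ℓ`, let `j` be the second smallest starting position of an
occurrence of `C` in `U`, and let `P = U[0..p)` be an aperiodic prefix of `U`
with `j ≤ p ≤ c`. Then (a) `P` occurs in `U` at position `ℓ - c`;
(b) `c < 2p`; (c) `P` has no occurrence in `U` starting at any position `q`
with `ℓ - c < q ≤ ℓ - p`; consequently `ℓ - c` lies in `(ℓ - 2p, ℓ)`. -/
theorem stmt15 {α : Type*} (U : List α) (c j p : ℕ)
    (hc : c < U.length)
    (hcov : IsCover (U.take c) U)
    (hmin : ∀ C' : List α, IsCover C' U → c ≤ C'.length)
    (hj0 : 0 < j) (hjocc : OccursAt (U.take c) U j)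
    (hjmin : ∀ i, 0 < i → i < j → ¬ OccursAt (U.take c) U i)
    (hjp : j ≤ p) (hpc : p ≤ c) (hap : StrAperiodic (U.take p)) :
    OccursAt (U.take p) U (U.length - c) ∧
    c < 2 * p ∧
    (∀ q, U.length - c < q → q ≤ U.length - p → ¬ OccursAt (U.take p) U q) ∧
    U.length - 2 * p < U.length - c ∧ U.length - c < U.length := by
  set L := U.length with hL
  have hpl : p ≤ L := le_trans hpc (le_of_lt hc)
  have hjc : j ≤ c := le_trans hjp hpc
  have hcl : c ≤ L := le_of_lt hc
  have hp0 : 0 < p := lt_of_lt_of_le hj0 hjp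
  have hc0 : 0 < c := lt_of_lt_of_le hp0 hpc
  have hL0 : 0 < L := lt_trans hc0 hc
  -- pointwise facts from the occurrence of C at j
  obtain ⟨hjlen, Ej⟩ := occ_points hcl hjocc
  -- C occurs at L - c (covering the last position)
  obtain ⟨i, hiocc, hile, hilt⟩ := hcov.2 (L - 1) (by omega)
  obtain ⟨hilen, Ei⟩ := occ_points hcl hiocc
  have hieq : i = L - c := by
    rw [List.length_take, Nat.min_eq_left hcl] at hilt
    omega
  subst hieq
  have Eend : ∀ x, x < c → U[(L - c) + x]? = U[x]? := Ei
  -- key: c < 2 * j (otherwise U.take (c - j) would be a shorter cover)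
  have hc2j : c < 2 * j := by
    by_contra hcon
    push_neg at hcon
    have hDcov : IsCover (U.take (c - j)) U := by
      constructor
      · exact ⟨0, occ_mk (by omega) (fun x hx => by rw [Nat.zero_add])⟩
      · intro q hq
        obtain ⟨i', hi'occ, hi'le, hi'lt⟩ := hcov.2 q hq
        obtain ⟨hi'len, Ei'⟩ := occ_points hcl hi'occ
        rw [List.length_take, Nat.min_eq_left hcl] at hi'lt
        rw [List.length_take, Nat.min_eq_left (show c - j ≤ L by omega)]
        by_cases hcase : q < i' + (c - j)
        · refine ⟨i', occ_mk (by omega) (fun x hx => Ei' x (by omega)), hi'le, hcase⟩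
        · refine ⟨i' + j, occ_mk (by omega) (fun x hx => ?_), by omega, by omega⟩
          have h1 : U[i' + (j + x)]? = U[j + x]? := Ei' (j + x) (by omega)
          have h2 : U[j + x]? = U[x]? := Ej x (by omega)
          rw [show i' + j + x = i' + (j + x) by omega, h1, h2]
    have := hmin _ hDcov
    rw [List.length_take, Nat.min_eq_left (show c - j ≤ L by omega)] at this
    omega
  have hb : c < 2 * p := lt_of_lt_of_le hc2j (by omega)
  refine ⟨?_, hb, ?_, by omega, by omega⟩
  · -- (a) P occurs at L - c
    exact occ_mk (by omega) (fun x hx => Eend x (by omega))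
  · -- (c) no occurrence of P in (L - c, L - p]
    intro q hq1 hq2 hocc
    obtain ⟨hqlen, Eq⟩ := occ_points hpl hocc
    set d := q - (L - c) with hd
    have hd0 : 0 < d := by omega
    have hdc : d ≤ c - p := by omega
    have hqd : q = (L - c) + d := by omega
    -- U[d + x]? = U[x]? for x < p
    have E1 : ∀ x, x < p → U[d + x]? = U[x]? := by
      intro x hx
      have h1 : U[(L - c) + (d + x)]? = U[d + x]? := Eend (d + x) (by omega)
      have h2 : U[q + x]? = U[x]? := Eq x hx
      rw [show q + x = (L - c) + (d + x) by omega] at h2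
      rw [← h1, h2]
    -- d is a period of U.take p
    have hperd : IsPeriod d (U.take p) := by
      refine ⟨hd0, fun x hx => ?_⟩
      rw [List.length_take, Nat.min_eq_left hpl] at hx
      rw [List.getElem?_take, if_pos (by omega : x < p),
          List.getElem?_take, if_pos (by omega : x + d < p)]
      rw [show x + d = d + x by omega]
      exact (E1 x (by omega)).symm
    have hpd : p < 2 * d := by
      have := hap d hperd
      rwa [List.length_take, Nat.min_eq_left hpl] at this
    have hdj : d < j := by omega
    -- e = j - d is a period of U.take p
    have hpere : IsPeriod (j - d) (U.take p) := by
      refine ⟨by omega, fun x hx => ?_⟩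
      rw [List.length_take, Nat.min_eq_left hpl] at hx
      rw [List.getElem?_take, if_pos (by omega : x < p),
          List.getElem?_take, if_pos (by omega : x + (j - d) < p)]
      have h1 : U[d + (x + (j - d))]? = U[x + (j - d)]? := E1 _ (by omega)
      have h2 : U[j + x]? = U[x]? := Ej x (by omega)
      rw [show d + (x + (j - d)) = j + x by omega] at h1
      rw [← h1, h2]
    have hpe : p < 2 * (j - d) := by
      have := hap _ hpere
      rwa [List.length_take, Nat.min_eq_left hpl] at this
    omega
end

section
/- Let T be a string over the alphabet {a,b}. The following are equivalent: (1) the string aba is a cover of T; (2) aba is both a prefix and a suffix of T, and T contains neither bb nor aaa as a substring; (3) T is a concatenation of one or more strings of the form (ab)^k a with k ≥ 1. -/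
/-- The letter `a`. -/
def la : Bool := true
/-- The letter `b`. -/
def lb : Bool := false

section Helpers

variable {α : Type*}

theorem occursAt_iff' (C T : List α) (i : ℕ) :
    OccursAt C T i ↔ ∃ s t : List α, T = s ++ C ++ t ∧ s.length = i := by
  constructor
  · rintro ⟨h1, h2⟩
    have hd : T.drop i = C ++ T.drop (i + C.length) := by
      conv_lhs => rw [← List.take_append_drop C.length (T.drop i)]
      rw [h2, List.drop_drop]
    refine ⟨T.take i, T.drop (i + C.length), ?_, List.length_take_of_le (by omega)⟩
    conv_lhs => rw [← List.take_append_drop i T, hd]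
    rw [List.append_assoc]
  · rintro ⟨s, t, rfl, rfl⟩
    refine ⟨by simp, ?_⟩
    rw [List.append_assoc, List.drop_left, List.take_left]

theorem occursAt_getElem? {C T : List α} {i : ℕ} (h : OccursAt C T i)
    (k : ℕ) (hk : k < C.length) : T[i + k]? = C[k]? := by
  obtain ⟨h1, h2⟩ := h
  conv_rhs => rw [← h2]
  rw [List.getElem?_take, if_pos hk, List.getElem?_drop]

theorem occursAt_append_right {C X Y : List α} {i : ℕ} (h : OccursAt C X i) :
    OccursAt C (X ++ Y) i := by
  rw [occursAt_iff'] at h ⊢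
  obtain ⟨s, t, rfl, rfl⟩ := h
  exact ⟨s, t ++ Y, by simp, rfl⟩

theorem occursAt_append_left {C X Y : List α} {j : ℕ} (h : OccursAt C Y j) :
    OccursAt C (X ++ Y) (X.length + j) := by
  rw [occursAt_iff'] at h ⊢
  obtain ⟨s, t, rfl, rfl⟩ := h
  exact ⟨X ++ s, t, by simp, by simp⟩

theorem isCover_append {C X Y : List α} (hX : IsCover C X) (hY : IsCover C Y) :
    IsCover C (X ++ Y) := by
  obtain ⟨⟨i0, hi0⟩, hcov⟩ := hX
  refine ⟨⟨i0, occursAt_append_right hi0⟩, ?_⟩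
  intro q hq
  rw [List.length_append] at hq
  rcases lt_or_ge q X.length with h | h
  · obtain ⟨i, hi, h1, h2⟩ := hcov q h
    exact ⟨i, occursAt_append_right hi, h1, h2⟩
  · obtain ⟨j, hj, h1, h2⟩ := hY.2 (q - X.length) (by omega)
    exact ⟨X.length + j, occursAt_append_left hj, by omega, by omega⟩

theorem isCover_prefix {C T : List α} (hC : C ≠ []) (h : IsCover C T) : C <+: T := by
  have hCl : 0 < C.length := List.length_pos_iff.mpr hC
  obtain ⟨⟨i0, hi0⟩, hcov⟩ := h
  have hT : 0 < T.length := by have := hi0.1; omega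
  obtain ⟨i, hi, h1, _⟩ := hcov 0 hT
  have : i = 0 := Nat.le_zero.mp h1
  subst this
  rw [occursAt_iff'] at hi
  obtain ⟨s, t, rfl, hs⟩ := hi
  rw [List.length_eq_zero_iff] at hs
  subst hs
  exact ⟨t, by simp⟩

theorem isCover_suffix {C T : List α} (hC : C ≠ []) (h : IsCover C T) : C <:+ T := by
  have hCl : 0 < C.length := List.length_pos_iff.mpr hC
  obtain ⟨⟨i0, hi0⟩, hcov⟩ := h
  have hT : 0 < T.length := by have := hi0.1; omega
  obtain ⟨i, hi, h1, h2⟩ := hcov (T.length - 1) (by omega)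
  have hle := hi.1
  have : i + C.length = T.length := by omega
  rw [occursAt_iff'] at hi
  obtain ⟨s, t, rfl, hs⟩ := hi
  have ht : t = [] := by
    have hlen : (s ++ C ++ t).length = s.length + (C.length + t.length) := by simp
    have : t.length = 0 := by omega
    exact List.length_eq_zero_iff.mp this
  subst ht
  exact ⟨s, by simp⟩

end Helpers

theorem cover_prepend {X : List Bool} (h : IsCover [la, lb, la] X) :
    IsCover [la, lb, la] ([la, lb] ++ X) := by
  obtain ⟨t, ht⟩ := isCover_prefix (by simp) h
  have occ0 : OccursAt [la, lb, la] ([la, lb] ++ X) 0 := by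
    rw [occursAt_iff']
    exact ⟨[], lb :: la :: t, by rw [← ht]; simp, rfl⟩
  refine ⟨⟨0, occ0⟩, ?_⟩
  intro q hq
  rcases lt_or_ge q 3 with h3 | h3
  · exact ⟨0, occ0, Nat.zero_le q, by simp; omega⟩
  · have hq' : q - 2 < X.length := by simp at hq; omega
    obtain ⟨j, hj, h1, h2⟩ := h.2 (q - 2) hq'
    simp only [List.length_cons, List.length_nil] at h2 ⊢
    refine ⟨2 + j, ?_, by omega, by omega⟩
    have := occursAt_append_left (X := [la, lb]) hj
    simpa using this

theorem cover_block (k : ℕ) (hk : 1 ≤ k) :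
    IsCover [la, lb, la] ((List.replicate k [la, lb]).flatten ++ [la]) := by
  induction k, hk using Nat.le_induction with
  | base =>
    have hb : (List.replicate 1 [la, lb]).flatten ++ [la] = [la, lb, la] := rfl
    rw [hb]
    refine ⟨⟨0, ⟨by simp, rfl⟩⟩, ?_⟩
    intro q hq
    simp at hq
    exact ⟨0, ⟨by simp, rfl⟩, Nat.zero_le q, by simp; omega⟩
  | succ k hk ih =>
    have hb : (List.replicate (k + 1) [la, lb]).flatten ++ [la]
        = [la, lb] ++ ((List.replicate k [la, lb]).flatten ++ [la]) := by
      simp [List.replicate_succ]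
    rw [hb]
    exact cover_prepend ih

theorem lemA : ∀ L : List ℕ, L ≠ [] → (∀ k ∈ L, 1 ≤ k) →
    IsCover [la, lb, la]
      ((L.map fun k => (List.replicate k [la, lb]).flatten ++ [la]).flatten) := by
  intro L
  induction L with
  | nil => intro h; exact absurd rfl h
  | cons k L' ih =>
    intro _ hmem
    cases L' with
    | nil =>
      have := cover_block k (hmem k (by simp))
      simpa using this
    | cons k2 L'' =>
      have h1 := cover_block k (hmem k (by simp))
      have h2 := ih (by simp) (fun x hx => hmem x (List.mem_cons_of_mem _ hx))
      have := isCover_append h1 h2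
      simpa using this

theorem lemB (T : List Bool) (h : IsCover [la, lb, la] T) :
    [la, lb, la] <+: T ∧ [la, lb, la] <:+ T ∧ ¬ [lb, lb] <:+: T ∧ ¬ [la, la, la] <:+: T := by
  refine ⟨isCover_prefix (by simp) h, isCover_suffix (by simp) h, ?_, ?_⟩
  · rintro ⟨s, t, hst⟩
    obtain ⟨i, hocc⟩ : ∃ i, OccursAt [lb, lb] T i :=
      ⟨s.length, (occursAt_iff' _ _ _).mpr ⟨s, t, hst.symm, rfl⟩⟩
    clear hst
    have e0 : T[i]? = some lb := by
      have := occursAt_getElem? hocc 0 (by norm_num); simpa using this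
    have e1 : T[i + 1]? = some lb := by
      have := occursAt_getElem? hocc 1 (by norm_num); simpa using this
    have hiT : i < T.length := by have := hocc.1; simp at this; omega
    obtain ⟨j, hj, h1, h2⟩ := h.2 i hiT
    have f0 : T[j]? = some la := by
      have := occursAt_getElem? hj 0 (by norm_num); simpa using this
    have f1 : T[j + 1]? = some lb := by
      have := occursAt_getElem? hj 1 (by norm_num); simpa using this
    have f2 : T[j + 2]? = some la := by
      have := occursAt_getElem? hj 2 (by norm_num); simpa using this
    have hcase : i = j ∨ i = j + 1 ∨ i = j + 2 := by simp at h2; omega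
    rcases hcase with rfl | rfl | rfl
    · have := e0.symm.trans f0; simp [la, lb] at this
    · have := e1.symm.trans f2; simp [la, lb] at this
    · have := e0.symm.trans f2; simp [la, lb] at this
  · rintro ⟨s, t, hst⟩
    obtain ⟨i, hocc⟩ : ∃ i, OccursAt [la, la, la] T i :=
      ⟨s.length, (occursAt_iff' _ _ _).mpr ⟨s, t, hst.symm, rfl⟩⟩
    clear hst
    have e0 : T[i]? = some la := by
      have := occursAt_getElem? hocc 0 (by norm_num); simpa using this
    have e1 : T[i + 1]? = some la := by
      have := occursAt_getElem? hocc 1 (by norm_num); simpa using this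
    have e2 : T[i + 2]? = some la := by
      have := occursAt_getElem? hocc 2 (by norm_num); simpa using this
    have hiT : i + 1 < T.length := by have := hocc.1; simp at this; omega
    obtain ⟨j, hj, h1, h2⟩ := h.2 (i + 1) hiT
    have f1 : T[j + 1]? = some lb := by
      have := occursAt_getElem? hj 1 (by norm_num); simpa using this
    have hcase : i + 1 = j ∨ i = j ∨ i = j + 1 := by simp at h2; omega
    rcases hcase with he | rfl | rfl
    · have h22 : i + 2 = j + 1 := by omega
      rw [h22] at e2
      have := e2.symm.trans f1; simp [la, lb] at this
    · have := e1.symm.trans f1; simp [la, lb] at this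
    · have := e0.symm.trans f1; simp [la, lb] at this

theorem lemC : ∀ n (T : List Bool), T.length ≤ n →
    [la, lb, la] <+: T → [la, lb, la] <:+ T →
    ¬ [lb, lb] <:+: T → ¬ [la, la, la] <:+: T →
    ∃ L : List ℕ, L ≠ [] ∧ (∀ k ∈ L, 1 ≤ k) ∧
      T = (L.map fun k => (List.replicate k [la, lb]).flatten ++ [la]).flatten := by
  intro n
  induction n with
  | zero =>
    intro T hT hpre _ _ _
    exfalso
    have := hpre.length_le
    simp at this
    omega
  | succ n ih =>
    intro T hT hpre hsuf hbb haaa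
    obtain ⟨t0, ht0⟩ := hpre
    subst ht0
    cases t0 with
    | nil => exact ⟨[1], by simp, by simp, by decide⟩
    | cons c t1 =>
      cases c with
      | false =>
        -- c = lb
        cases t1 with
        | nil => exact absurd hsuf (by decide)
        | cons d t2 =>
          cases d with
          | false => exact absurd ⟨[la, lb, la], t2, rfl⟩ hbb
          | true =>
            -- T = [la,lb] ++ T1, T1 = [la,lb,la] ++ t2
            set T1 : List Bool := [la, lb, la] ++ t2 with hT1def
            have hT1 : [la, lb, la] ++ (false :: true :: t2) = [la, lb] ++ T1 := rfl
            have hsub : T1 <:+ [la, lb, la] ++ (false :: true :: t2) := ⟨[la, lb], rfl⟩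
            have hsuf1 : [la, lb, la] <:+ T1 :=
              List.suffix_of_suffix_length_le hsuf hsub
                (by simp only [hT1def, List.length_append, List.length_cons,
                      List.length_nil]; omega)
            have hlen : T1.length ≤ n := by
              simp only [hT1def, List.length_append, List.length_cons] at hT ⊢
              simp at hT ⊢
              omega
            obtain ⟨L1, hne, hk, heq⟩ := ih T1 hlen ⟨t2, rfl⟩ hsuf1
              (fun hh => hbb (hh.trans hsub.isInfix))
              (fun hh => haaa (hh.trans hsub.isInfix))
            cases L1 with
            | nil => exact absurd rfl hne
            | cons k L1' =>
              refine ⟨(k + 1) :: L1', by simp, ?_, ?_⟩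
              · intro x hx
                rcases List.mem_cons.mp hx with rfl | hx'
                · omega
                · exact hk x (List.mem_cons_of_mem _ hx')
              · rw [List.map_cons, List.flatten_cons]
                rw [List.map_cons, List.flatten_cons] at heq
                have hb : (List.replicate (k + 1) [la, lb]).flatten ++ [la]
                    = [la, lb] ++ ((List.replicate k [la, lb]).flatten ++ [la]) := by
                  simp [List.replicate_succ]
                rw [hb, List.append_assoc, ← heq]
                exact hT1
      | true =>
        -- c = la
        cases t1 with
        | nil => exact absurd hsuf (by decide)
        | cons d t2 =>
          cases d with
          | true => exact absurd ⟨[la, lb], t2, rfl⟩ haaa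
          | false =>
            cases t2 with
            | nil => exact absurd hsuf (by decide)
            | cons e t3 =>
              cases e with
              | false => exact absurd ⟨[la, lb, la, la], t3, rfl⟩ hbb
              | true =>
                set T2 : List Bool := [la, lb, la] ++ t3 with hT2def
                have hT2 : [la, lb, la] ++ (true :: false :: true :: t3)
                    = [la, lb, la] ++ T2 := rfl
                have hsub : T2 <:+ [la, lb, la] ++ (true :: false :: true :: t3) :=
                  ⟨[la, lb, la], rfl⟩
                have hsuf2 : [la, lb, la] <:+ T2 :=
                  List.suffix_of_suffix_length_le hsuf hsub
                    (by simp only [hT2def, List.length_append, List.length_cons,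
                          List.length_nil]; omega)
                have hlen : T2.length ≤ n := by
                  simp only [hT2def, List.length_append, List.length_cons] at hT ⊢
                  simp at hT ⊢
                  omega
                obtain ⟨L2, hne, hk, heq⟩ := ih T2 hlen ⟨t3, rfl⟩ hsuf2
                  (fun hh => hbb (hh.trans hsub.isInfix))
                  (fun hh => haaa (hh.trans hsub.isInfix))
                refine ⟨1 :: L2, by simp, ?_, ?_⟩
                · intro x hx
                  rcases List.mem_cons.mp hx with rfl | hx'
                  · omega
                  · exact hk x hx'
                · rw [List.map_cons, List.flatten_cons]
                  have hb : (List.replicate 1 [la, lb]).flatten ++ [la] = [la, lb, la] := rfl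
                  rw [hb, ← heq]
                  exact hT2



/-- For a string `T` over `{a,b}`, the following are equivalent:
(1) `aba` is a cover of `T`;
(2) `aba` is both a prefix and a suffix of `T`, and `T` contains neither `bb`
nor `aaa` as a substring;
(3) `T` is a concatenation of one or more strings of the form `(ab)^k a`, `k ≥ 1`. -/
theorem stmt16 (T : List Bool) :
    (IsCover [la, lb, la] T ↔
      ([la, lb, la] <+: T ∧ [la, lb, la] <:+ T ∧
        ¬ [lb, lb] <:+: T ∧ ¬ [la, la, la] <:+: T)) ∧
    (IsCover [la, lb, la] T ↔
      ∃ L : List ℕ, L ≠ [] ∧ (∀ k ∈ L, 1 ≤ k) ∧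
        T = (L.map fun k => (List.replicate k [la, lb]).flatten ++ [la]).flatten) := by

  constructor
  · constructor
    · exact lemB T
    · rintro ⟨hpre, hsuf, hbb, haaa⟩
      obtain ⟨L, hne, hk, heq⟩ := lemC T.length T le_rfl hpre hsuf hbb haaa
      rw [heq]
      exact lemA L hne hk
  · constructor
    · intro h
      obtain ⟨hpre, hsuf, hbb, haaa⟩ := lemB T h
      exact lemC T.length T le_rfl hpre hsuf hbb haaa
    · rintro ⟨L, hne, hk, rfl⟩
      exact lemA L hne hk
end

section
/- Let φ be the morphism from binary strings over {0,1} to strings over {a,b} defined by φ(0) = abababaabaababa and φ(1) = abababaababaaba (each image has length 15). For every nonempty string S over {0,1}, the string aba is a cover of φ(S). In particular, φ(S) has a proper cover, i.e., φ(S) is not superprimitive. -/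
/-- `φ(0) = abababa·aba·ababa`. -/
def phi0 : List Bool := [la,lb,la,lb,la,lb,la, la,lb,la, la,lb,la,lb,la]
/-- `φ(1) = abababa·ababa·aba`. -/
def phi1 : List Bool := [la,lb,la,lb,la,lb,la, la,lb,la,lb,la, la,lb,la]

/-- The morphism `φ` on letters (`false` = 0, `true` = 1). -/
def phi (s : Bool) : List Bool := if s then phi1 else phi0

/-- `φ` applied letter by letter to a binary string. -/
def phiStr (S : List Bool) : List Bool := (S.map phi).flatten

/-- `B` is a binary de Bruijn sequence of order `k`: it has length `2^k + k - 1`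
and every length-`k` binary string occurs in it exactly once. -/
def DeBruijn (k : ℕ) (B : List Bool) : Prop :=
  B.length = 2 ^ k + k - 1 ∧ ∀ W : List Bool, W.length = k → ∃! i, OccursAt W B i

/-! `aba` covers both blocks: it occurs in `φ(0)` at 0, 2, 4, 7, 10, 12 and in `φ(1)` at
0, 2, 4, 7, 9, 12. A common cover of two strings covers their concatenation, so `aba` covers
`φ(S)`, whose length `15 |S|` exceeds 3. -/

section Cover

variable {α : Type*} {C X Y : List α} {i : ℕ}

theorem OccursAt.append_right (h : OccursAt C X i) (Y : List α) : OccursAt C (X ++ Y) i := by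
  obtain ⟨hlen, htake⟩ := h
  refine ⟨by simp only [List.length_append]; omega, ?_⟩
  rw [List.drop_append_of_le_length (by omega),
    List.take_append_of_le_length (by simp only [List.length_drop]; omega), htake]

theorem OccursAt.append_left (h : OccursAt C Y i) (X : List α) :
    OccursAt C (X ++ Y) (X.length + i) := by
  obtain ⟨hlen, htake⟩ := h
  refine ⟨by simp only [List.length_append]; omega, ?_⟩
  rwa [List.drop_append, List.drop_eq_nil_of_le (by omega), List.nil_append,
    Nat.add_sub_cancel_left]

instance [DecidableEq α] : Decidable (OccursAt C X i) := by
  unfold OccursAt; infer_instance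

theorem IsCover.of_forall_lt (hX : X ≠ [])
    (h : ∀ q < X.length, ∃ i ≤ q, OccursAt C X i ∧ q < i + C.length) : IsCover C X := by
  obtain ⟨i, -, hi, -⟩ := h 0 (List.length_pos_iff.mpr hX)
  exact ⟨⟨i, hi⟩, fun q hq => (h q hq).imp fun i ⟨hiq, hi, hqi⟩ => ⟨hi, hiq, hqi⟩⟩

theorem IsCover.append (hX : IsCover C X) (hY : IsCover C Y) : IsCover C (X ++ Y) := by
  obtain ⟨⟨i₀, hi₀⟩, hXcov⟩ := hX
  refine ⟨⟨i₀, hi₀.append_right Y⟩, fun q hq => ?_⟩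
  by_cases hqX : q < X.length
  · obtain ⟨i, hi, hiq, hqi⟩ := hXcov q hqX
    exact ⟨i, hi.append_right Y, hiq, hqi⟩
  · rw [List.length_append] at hq
    obtain ⟨i, hi, hiq, hqi⟩ := hY.2 (q - X.length) (by omega)
    exact ⟨X.length + i, hi.append_left X, by omega, by omega⟩

theorem IsCover.flatten {L : List (List α)} (hL : L ≠ []) (h : ∀ X ∈ L, IsCover C X) :
    IsCover C L.flatten := by
  induction L with
  | nil => exact absurd rfl hL
  | cons X L ih =>
    rw [List.flatten_cons]
    by_cases hL' : L = []
    · subst hL'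
      simpa using h X List.mem_cons_self
    · exact (h X List.mem_cons_self).append (ih hL' fun Y hY => h Y (List.mem_cons_of_mem X hY))

end Cover

theorem isCover_aba_phi (s : Bool) : IsCover [la, lb, la] (phi s) := by
  cases s <;> exact IsCover.of_forall_lt (by decide) (by decide)

theorem length_phiStr (S : List Bool) : (phiStr S).length = 15 * S.length := by
  have hphi : ∀ s, (phi s).length = 15 := by decide
  simp [phiStr, List.length_flatten, Function.comp_def, hphi, mul_comm]

/-- For every nonempty binary string `S`, `aba` is a cover of `φ(S)`;
in particular `φ(S)` has a proper cover, i.e. it is not superprimitive. -/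
theorem stmt17 (S : List Bool) (hS : S ≠ []) :
    IsCover [la, lb, la] (phiStr S) ∧ ¬ Superprimitive (phiStr S) := by
  have hcover : IsCover [la, lb, la] (phiStr S) :=
    IsCover.flatten (by simpa using hS) fun X hX => by
      obtain ⟨s, -, rfl⟩ := List.mem_map.mp hX
      exact isCover_aba_phi s
  have hproper : [la, lb, la].length < (phiStr S).length := by
    rw [length_phiStr]
    have := List.length_pos_iff.mpr hS
    simp only [List.length_cons, List.length_nil]
    omega
  exact ⟨hcover, fun hsp => hsp ⟨_, hcover, hproper⟩⟩
end
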